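/- Let S be a group, P ≤ S, A ≤ Aut(P) with Aut_S(P) ≤ A, and P̃ := ⋂_{β ∈ A} N_β where N_β = { y ∈ N_S(P) : β c_y β⁻¹ ∈ Aut_S(P) }. Let α ∈ A and suppose α̃ : N_α → S is an injective homomorphism with α̃|_P = α and such that for every y ∈ N_α, the automorphism α c_y α⁻¹ of P equals c_{α̃(y)} (in particular α̃(y) ∈ N_S(P)). Then α̃(P̃) ⊆ P̃. -/

import Mathlib

variable {S : Type*} [Group S]

/-- Conjugation by an element of the normalizer, as an automorphism of `P`. -/
def conjAut (P : Subgroup S) (y : (Subgroup.normalizer (P : Set S))) : MulAut P where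
  toFun p := ⟨(y : S) * p * (y : S)⁻¹, (Subgroup.mem_normalizer_iff.mp y.2 p).1 p.2⟩
  invFun p := ⟨(y : S)⁻¹ * p * (y : S), by
    simpa using (Subgroup.mem_normalizer_iff.mp (inv_mem y.2) (p : S)).1 p.2⟩
  left_inv p := by apply Subtype.ext; simp [mul_assoc]
  right_inv p := by apply Subtype.ext; simp [mul_assoc]
  map_mul' p q := by apply Subtype.ext; simp [mul_assoc]

/-- Conjugation as a homomorphism `N_S(P) →* Aut(P)`. -/
def conjHom (P : Subgroup S) : (Subgroup.normalizer (P : Set S)) →* MulAut P where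
  toFun := conjAut P
  map_one' := by
    apply MulEquiv.ext; intro p; apply Subtype.ext; simp [conjAut]
  map_mul' y z := by
    apply MulEquiv.ext; intro p; apply Subtype.ext; simp [conjAut, mul_assoc]

/-- `Aut_S(P)`: automorphisms of `P` induced by conjugation in `S`. -/
def AutS (P : Subgroup S) : Subgroup (MulAut P) := (conjHom P).range

/-- `N_α = { y ∈ N_S(P) : α ∘ c_y ∘ α⁻¹ ∈ Aut_S(P) }`. -/
def Nalpha (P : Subgroup S) (α : MulAut P) : Set S :=
  { y | ∃ hy : y ∈ (Subgroup.normalizer (P : Set S)), α * conjAut P ⟨y, hy⟩ * α⁻¹ ∈ AutS P }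

theorem mem_Nalpha_of_conj_eq {P : Subgroup S} {α β : MulAut P} {y z : S}
    (hy : y ∈ Subgroup.normalizer (P : Set S)) (hz : z ∈ Subgroup.normalizer (P : Set S))
    (hconj : α * conjAut P ⟨y, hy⟩ * α⁻¹ = conjAut P ⟨z, hz⟩) (hβα : y ∈ Nalpha P (β * α)) :
    z ∈ Nalpha P β := by
  obtain ⟨hy', hmem⟩ := hβα
  have hβz : β * conjAut P ⟨z, hz⟩ * β⁻¹ = (β * α) * conjAut P ⟨y, hy'⟩ * (β * α)⁻¹ := by
    rw [← hconj]; group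
  exact ⟨hz, hβz ▸ hmem⟩

theorem stmt4_general (P : Subgroup S) (A : Subgroup (MulAut P))
    (α : MulAut P) (hα : α ∈ A) (φ : S → S)
    (hconj : ∀ (y : S) (hy : y ∈ (Subgroup.normalizer (P : Set S))), y ∈ Nalpha P α →
      ∃ hn : φ y ∈ (Subgroup.normalizer (P : Set S)),
        α * conjAut P ⟨y, hy⟩ * α⁻¹ = conjAut P ⟨φ y, hn⟩) :
    ∀ y ∈ { y : S | ∀ β ∈ A, y ∈ Nalpha P β },
      φ y ∈ { y : S | ∀ β ∈ A, y ∈ Nalpha P β } := by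
  intro y hy β hβ
  obtain ⟨hyN, -⟩ := hy α hα
  obtain ⟨hφy, hαy⟩ := hconj y hyN (hy α hα)
  exact mem_Nalpha_of_conj_eq hyN hφy hαy (hy (β * α) (A.mul_mem hβ hα))

/-- If `α̃` extends `α ∈ A` over `N_α` (with the conjugation identity
`α c_y α⁻¹ = c_{α̃(y)}`), then `α̃(P̃) ⊆ P̃` where `P̃ = ⋂_{β ∈ A} N_β`. -/
theorem stmt4 (P : Subgroup S) (A : Subgroup (MulAut P)) (hA : AutS P ≤ A)
    (α : MulAut P) (hα : α ∈ A) (φ : S → S)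
    (hinj : Set.InjOn φ (Nalpha P α))
    (hmul : ∀ y ∈ Nalpha P α, ∀ z ∈ Nalpha P α, φ (y * z) = φ y * φ z)
    (hres : ∀ (p : S) (hp : p ∈ P), φ p = (α ⟨p, hp⟩ : S))
    (hconj : ∀ (y : S) (hy : y ∈ (Subgroup.normalizer (P : Set S))), y ∈ Nalpha P α →
      ∃ hn : φ y ∈ (Subgroup.normalizer (P : Set S)),
        α * conjAut P ⟨y, hy⟩ * α⁻¹ = conjAut P ⟨φ y, hn⟩) :
    ∀ y ∈ { y : S | ∀ β ∈ A, y ∈ Nalpha P β },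
      φ y ∈ { y : S | ∀ β ∈ A, y ∈ Nalpha P β } :=
  stmt4_general P A α hα φ hconj
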